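/- arXiv:2601.15185 — 2 statements merged into one kernel-verified Lean document; each statement's English description precedes it below -/
import Mathlib

section
/- Suppose X is an infinite set and G is a highly transitive group of permutations of X such that every non-identity element of G has infinite support. Then the group Zariski topology on G is irreducible. -/
/-- The group Zariski topology on a group `G`: the topology generated by the sets
`{x | g₀ * x ^ k₀ * g₁ * ⋯ * x ^ k_{l-1} * g_l ≠ 1}`. A word is encoded by its
leading constant `g₀` together with the list of pairs `(kᵢ, g_{i+1})`. -/
def zariskiTopology (G : Type*) [Group G] : TopologicalSpace G :=
  TopologicalSpace.generateFrom
    {S : Set G | ∃ (g₀ : G) (w : List (ℤ × G)),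
      S = {x : G | g₀ * (w.map fun p => x ^ p.1 * p.2).prod ≠ 1}}

/-!
A word map `y ↦ g₀ * y ^ k₁ * g₁ * ⋯` on permutations is local in a uniform way: its value at a
point `p` depends only on the values of `y` at the points `π p`, for `π` in a finite set of
permutations not depending on `p`. If a word is nontrivial at some `x ∈ G`, its value at `x` moves
infinitely many points, so `p` can be chosen with all the `π p` and `x (π p)` outside any given
finite set; the word is then nontrivial at every permutation agreeing with `x` at the `π p`.
For finitely many words these finite partial injections can be placed disjointly and glued, and
high transitivity extends the glued injection to an element of `G` lying in all the given
subbasic open sets. Since every nonempty open set contains a finite intersection of nonempty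
subbasic ones, any two nonempty open sets meet.
-/

open Set Filter

theorem mem_of_isOpen_generateFrom {α : Type*} {s : Set (Set α)} {l : Filter α}
    (hs : ∀ t ∈ s, t.Nonempty → t ∈ l) {U : Set α}
    (hU : (TopologicalSpace.generateFrom s).IsOpen U) (hne : U.Nonempty) : U ∈ l := by
  induction hU with
  | basic t ht => exact hs t ht hne
  | univ => exact univ_mem
  | inter t u _ _ iht ihu => exact inter_mem (iht hne.left) (ihu hne.right)
  | sUnion S _ ih =>
    obtain ⟨x, t, ht, hxt⟩ := hne
    exact mem_of_superset (ih t ht ⟨x, hxt⟩) (subset_sUnion_of_mem ht)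

def wordMap {H : Type*} [Group H] (g₀ : H) (w : List (ℤ × H)) (x : H) : H :=
  g₀ * (w.map fun p => x ^ p.1 * p.2).prod

theorem map_wordMap {H K : Type*} [Group H] [Group K] (φ : H →* K) (g₀ : H)
    (w : List (ℤ × H)) (x : H) :
    φ (wordMap g₀ w x) = wordMap (φ g₀) (w.map (Prod.map id φ)) (φ x) := by
  simp [wordMap, map_list_prod, Function.comp_def]

namespace Equiv.Perm

variable {X : Type*}

def IsLocalAt (F : Perm X → Perm X) (x : Perm X) : Prop :=
  ∃ L : Set (Perm X), L.Finite ∧ ∀ y p, (∀ π ∈ L, y (π p) = x (π p)) → F y p = F x p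

theorem isLocalAt_const (g x : Perm X) : IsLocalAt (fun _ => g) x :=
  ⟨∅, finite_empty, fun _ _ _ => rfl⟩

theorem isLocalAt_id (x : Perm X) : IsLocalAt (fun y => y) x :=
  ⟨{1}, finite_singleton 1, fun _ _ h => h 1 rfl⟩

namespace IsLocalAt

variable {F₁ F₂ : Perm X → Perm X} {x : Perm X}

theorem mul (h₁ : IsLocalAt F₁ x) (h₂ : IsLocalAt F₂ x) :
    IsLocalAt (fun y => F₁ y * F₂ y) x := by
  obtain ⟨L₁, hL₁, hF₁⟩ := h₁
  obtain ⟨L₂, hL₂, hF₂⟩ := h₂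
  refine ⟨L₂ ∪ (· * F₂ x) '' L₁, hL₂.union (hL₁.image _), fun y p h => ?_⟩
  have h₂p : F₂ y p = F₂ x p := hF₂ y p fun π hπ => h π (Or.inl hπ)
  have h₁p : F₁ y (F₂ x p) = F₁ x (F₂ x p) :=
    hF₁ y _ fun π hπ => h (π * F₂ x) (Or.inr ⟨π, hπ, rfl⟩)
  simp only [Perm.mul_apply, h₂p, h₁p]

theorem inv (h₁ : IsLocalAt F₁ x) : IsLocalAt (fun y => (F₁ y)⁻¹) x := by
  obtain ⟨L, hL, hF₁⟩ := h₁
  refine ⟨(· * (F₁ x)⁻¹) '' L, hL.image _, fun y p h => ?_⟩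
  have hq : F₁ y ((F₁ x)⁻¹ p) = F₁ x ((F₁ x)⁻¹ p) := hF₁ y _ fun π hπ => h _ ⟨π, hπ, rfl⟩
  rw [Perm.inv_eq_iff_eq, hq]
  exact ((F₁ x).apply_symm_apply p).symm

end IsLocalAt

theorem isLocalAt_zpow (k : ℤ) (x : Perm X) : IsLocalAt (· ^ k) x := by
  induction k using Int.induction_on with
  | zero => simpa using isLocalAt_const 1 x
  | succ k hk => simpa only [zpow_add_one] using hk.mul (isLocalAt_id x)
  | pred k hk => simpa only [zpow_sub_one] using hk.mul (isLocalAt_id x).inv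

theorem isLocalAt_wordMap (g₀ : Perm X) (w : List (ℤ × Perm X)) (x : Perm X) :
    IsLocalAt (wordMap g₀ w) x := by
  refine (isLocalAt_const g₀ x).mul ?_
  induction w with
  | nil => simpa using isLocalAt_const 1 x
  | cons a w ih =>
    simpa only [List.map_cons, List.prod_cons] using
      ((isLocalAt_zpow a.1 x).mul (isLocalAt_const a.2 x)).mul ih

end Equiv.Perm

open Equiv

section FarExtensions

variable {X : Type*}

-- Avoiding a prescribed finite set is what lets two such partial injections be glued, so that
-- these sets form a filter.
def farExtensions (X : Type*) : Filter (Perm X) where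
  sets := {U | ∀ S : Set X, S.Finite → ∃ (A : Set X) (f : X → X), A.Finite ∧ InjOn f A ∧
    Disjoint A S ∧ Disjoint (f '' A) S ∧ ∀ y : Perm X, EqOn y f A → y ∈ U}
  univ_sets _ _ := ⟨∅, id, finite_empty, injOn_empty _, empty_disjoint _,
    by simp, fun _ _ => mem_univ _⟩
  sets_of_superset {U V} hU hUV S hS := by
    obtain ⟨A, f, hA, hf, hAS, hfAS, hfU⟩ := hU S hS
    exact ⟨A, f, hA, hf, hAS, hfAS, fun y hy => hUV (hfU y hy)⟩
  inter_sets {U V} hU hV S hS := by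
    classical
    obtain ⟨A, f, hA, hf, hAS, hfAS, hfU⟩ := hU S hS
    obtain ⟨B, g, hB, hg, hBS, hgBS, hgV⟩ :=
      hV (S ∪ A ∪ f '' A) ((hS.union hA).union (hA.image f))
    simp only [disjoint_union_right] at hBS hgBS
    have hfB : EqOn (B.piecewise g f) f A := fun a ha =>
      piecewise_eq_of_notMem _ _ _ (hBS.1.2.notMem_of_mem_right ha)
    have hgB : EqOn (B.piecewise g f) g B := piecewise_eqOn _ _ _
    refine ⟨A ∪ B, B.piecewise g f, hA.union hB, ?_, disjoint_union_left.2 ⟨hAS, hBS.1.1⟩, ?_,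
      fun y hy => ⟨hfU y ((hy.mono subset_union_left).trans hfB),
        hgV y ((hy.mono subset_union_right).trans hgB)⟩⟩
    · refine (injOn_union hBS.1.2.symm).2 ⟨hf.congr hfB.symm, hg.congr hgB.symm, ?_⟩
      intro a ha b hb
      rw [hfB ha, hgB hb]
      exact (hgBS.2.ne_of_mem (mem_image_of_mem g hb) (mem_image_of_mem f ha)).symm
    · rw [image_union, hfB.image_eq, hgB.image_eq]
      exact disjoint_union_left.2 ⟨hfAS, hgBS.1.1⟩

theorem setOf_ne_one_mem_farExtensions {F : Perm X → Perm X} {x : Perm X}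
    (hF : Perm.IsLocalAt F x) (hsupp : {p | F x p ≠ p}.Infinite) :
    {y | F y ≠ 1} ∈ farExtensions X := by
  obtain ⟨L, hL, hFL⟩ := hF
  intro S hS
  have hbad : (⋃ π ∈ L, π ⁻¹' S ∪ (x * π) ⁻¹' S).Finite :=
    hL.biUnion fun π _ =>
      (hS.preimage π.injective.injOn).union (hS.preimage (x * π).injective.injOn)
  obtain ⟨p, hp, hpbad⟩ := (hsupp.sdiff hbad).nonempty
  simp only [mem_iUnion, mem_union, mem_preimage, not_exists, not_or] at hpbad
  refine ⟨(· p) '' L, x, hL.image _, x.injective.injOn, ?_, ?_, fun y hy h1 => hp ?_⟩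
  · rw [disjoint_left]
    rintro _ ⟨π, hπ, rfl⟩
    exact (hpbad π hπ).1
  · rw [disjoint_left, image_image]
    rintro _ ⟨π, hπ, rfl⟩
    exact (hpbad π hπ).2
  · rw [← hFL y p fun π hπ => hy ⟨π, hπ, rfl⟩, h1, Perm.one_apply]

theorem comap_farExtensions_neBot {G : Subgroup (Perm X)}
    (htrans : ∀ (f : X → X) (s : Finset X), InjOn f ↑s → ∃ g ∈ G, ∀ x ∈ s, g x = f x) :
    (comap ((↑) : G → Perm X) (farExtensions X)).NeBot := by
  refine comap_neBot_iff.2 fun U hU => ?_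
  obtain ⟨A, f, hA, hf, -, -, hfU⟩ := hU ∅ finite_empty
  obtain ⟨g, hg, hgf⟩ := htrans f hA.toFinset (by simpa using hf)
  exact ⟨⟨g, hg⟩, hfU g fun a ha => hgf a (hA.mem_toFinset.2 ha)⟩

theorem setOf_wordMap_ne_one_mem_comap_farExtensions {G : Subgroup (Perm X)}
    (hsupp : ∀ g ∈ G, g ≠ 1 → {x : X | g x ≠ x}.Infinite) (g₀ : G) (w : List (ℤ × G))
    (hne : {x : G | wordMap g₀ w x ≠ 1}.Nonempty) :
    {x : G | wordMap g₀ w x ≠ 1} ∈ comap ((↑) : G → Perm X) (farExtensions X) := by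
  obtain ⟨x, hx⟩ := hne
  have hcoe (y : G) : ((wordMap g₀ w y : G) : Perm X) =
      wordMap (g₀ : Perm X) (w.map (Prod.map id G.subtype)) y :=
    map_wordMap G.subtype g₀ w y
  refine ⟨_, setOf_ne_one_mem_farExtensions
      (Perm.isLocalAt_wordMap (g₀ : Perm X) (w.map (Prod.map id G.subtype)) x) ?_,
    fun y hy h1 => hy (by rw [← hcoe, h1, OneMemClass.coe_one])⟩
  rw [← hcoe]
  exact hsupp _ (wordMap g₀ w x).2 (by simpa using hx)

theorem mem_comap_farExtensions_of_isOpen {G : Subgroup (Perm X)}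
    (hsupp : ∀ g ∈ G, g ≠ 1 → {x : X | g x ≠ x}.Infinite) {U : Set G}
    (hU : (zariskiTopology G).IsOpen U) (hne : U.Nonempty) :
    U ∈ comap ((↑) : G → Perm X) (farExtensions X) :=
  mem_of_isOpen_generateFrom (by
    rintro _ ⟨g₀, w, rfl⟩
    exact setOf_wordMap_ne_one_mem_comap_farExtensions hsupp g₀ w) hU hne

end FarExtensions

theorem zariski_irreducible_of_highly_transitive_general {X : Type*}
    (G : Subgroup (Equiv.Perm X))
    (htrans : ∀ (f : X → X) (s : Finset X), Set.InjOn f ↑s →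
      ∃ g ∈ G, ∀ x ∈ s, g x = f x)
    (hsupp : ∀ g ∈ G, g ≠ 1 → {x : X | g x ≠ x}.Infinite) :
    ∀ U V : Set G, (zariskiTopology G).IsOpen U → (zariskiTopology G).IsOpen V →
      U.Nonempty → V.Nonempty → (U ∩ V).Nonempty := by
  intro U V hU hV hUne hVne
  have := comap_farExtensions_neBot htrans
  exact nonempty_of_mem (inter_mem (mem_comap_farExtensions_of_isOpen hsupp hU hUne)
    (mem_comap_farExtensions_of_isOpen hsupp hV hVne))

/-- If X is an infinite set and G a highly transitive group of permutations of X all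
of whose non-identity elements have infinite support, then the group Zariski topology
on G is irreducible: any two non-empty Zariski-open sets intersect. -/
theorem zariski_irreducible_of_highly_transitive {X : Type*} [Infinite X]
    (G : Subgroup (Equiv.Perm X))
    (htrans : ∀ (f : X → X) (s : Finset X), Set.InjOn f ↑s →
      ∃ g ∈ G, ∀ x ∈ s, g x = f x)
    (hsupp : ∀ g ∈ G, g ≠ 1 → {x : X | g x ≠ x}.Infinite) :
    ∀ U V : Set G, (zariskiTopology G).IsOpen U → (zariskiTopology G).IsOpen V →
      U.Nonempty → V.Nonempty → (U ∩ V).Nonempty :=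
  zariski_irreducible_of_highly_transitive_general G htrans hsupp
end

section
/- Suppose X is a Hausdorff topological space with no isolated points and G is a group acting faithfully and highly transitively on X by homeomorphisms. Then the group Zariski topology on G is irreducible; in particular it is neither Hausdorff nor a group topology (when G is nontrivial). -/
open Set TopologicalSpace

theorem preirreducibleSpace_generateFrom {X : Type*} {S : Set (Set X)}
    (h : ∀ F ⊆ S, F.Finite → (∀ t ∈ F, t.Nonempty) → (⋂₀ F).Nonempty) :
    @PreirreducibleSpace X (generateFrom S) := by
  let := generateFrom S
  have hB := isTopologicalBasis_of_subbasis (rfl : ‹TopologicalSpace X› = generateFrom S)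
  refine ⟨fun U V hU hV ⟨a, _, ha⟩ ⟨b, _, hb⟩ => ?_⟩
  obtain ⟨-, ⟨Fa, ⟨hFa, hFaS⟩, rfl⟩, haF, hFaU⟩ := hB.exists_subset_of_mem_open ha hU
  obtain ⟨-, ⟨Fb, ⟨hFb, hFbS⟩, rfl⟩, hbF, hFbV⟩ := hB.exists_subset_of_mem_open hb hV
  have hne : ∀ t ∈ Fa ∪ Fb, t.Nonempty := by
    rintro t (ht | ht)
    exacts [⟨a, haF t ht⟩, ⟨b, hbF t ht⟩]
  obtain ⟨g, hg⟩ := h _ (union_subset hFaS hFbS) (hFa.union hFb) hne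
  rw [sInter_union] at hg
  exact ⟨g, mem_univ g, hFaU hg.1, hFbV hg.2⟩

section

variable {G : Type*} [Group G]

def wordProd (w : List (ℤ × G)) (x : G) : G :=
  (w.map fun p => x ^ p.1 * p.2).prod

theorem wordProd_cons (k : ℤ) (h : G) (w : List (ℤ × G)) (x : G) :
    wordProd ((k, h) :: w) x = x ^ k * h * wordProd w x :=
  rfl

theorem zariskiTopology_t1Space : @T1Space G (zariskiTopology G) := by
  let := zariskiTopology G
  refine ⟨fun g => ?_⟩
  have h : IsOpen {x : G | 1 * wordProd [(1, g⁻¹)] x ≠ 1} :=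
    isOpen_generateFrom_of_mem ⟨1, [(1, g⁻¹)], rfl⟩
  rw [← isOpen_compl_iff]
  convert h using 1
  ext x
  simp [wordProd, mul_inv_eq_one]

/-- Computing `wordProd w x • p` one letter `x^{±1}` at a time applies `x` (or undoes it) exactly
at the points `c • p`, `c ∈ wordSteps x w`. -/
noncomputable def wordSteps (x : G) : List (ℤ × G) → Finset G
  | [] => ∅
  | (k, h) :: w => open Classical in
      (Finset.Ico (min k 0) (max k 0)).image (fun m => x ^ m * (h * wordProd w x)) ∪
        wordSteps x w

variable {X : Type*} [MulAction G X]

theorem zpow_smul_eq_zpow_smul_of_forall_mem_Ico {x g : G} {q : X} {k : ℤ}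
    (h : ∀ m ∈ Finset.Ico (min k 0) (max k 0), g • x ^ m • q = x • x ^ m • q) :
    g ^ k • q = x ^ k • q := by
  induction k using Int.induction_on with
  | zero => simp
  | succ i ih =>
    have hi := h i (by simp only [Finset.mem_Ico]; omega)
    rw [add_comm, zpow_one_add, zpow_one_add, mul_smul, mul_smul,
      ih fun m hm => h m (by simp only [Finset.mem_Ico] at hm ⊢; omega), hi]
  | pred i ih =>
    have hi := h (-i - 1) (by simp only [Finset.mem_Ico]; omega)
    rw [show g ^ (-(i : ℤ) - 1) = g⁻¹ * g ^ (-(i : ℤ)) by group, mul_smul,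
      ih fun m hm => h m (by simp only [Finset.mem_Ico] at hm ⊢; omega), inv_smul_eq_iff, hi,
      ← mul_smul, ← zpow_one_add, show 1 + (-(i : ℤ) - 1) = -i by ring]

theorem wordProd_smul_eq_of_forall_mem_wordSteps {x g : G} {p : X} :
    ∀ {w : List (ℤ × G)}, (∀ c ∈ wordSteps x w, g • c • p = x • c • p) →
      wordProd w g • p = wordProd w x • p
  | [], _ => rfl
  | (k, h) :: w, hw => by
    classical
    have hrest : wordProd w g • p = wordProd w x • p :=
      wordProd_smul_eq_of_forall_mem_wordSteps fun c hc => hw c (Finset.mem_union_right _ hc)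
    simp only [wordProd_cons, mul_smul, hrest]
    refine zpow_smul_eq_zpow_smul_of_forall_mem_Ico fun m hm => ?_
    simpa only [mul_smul] using hw _ (Finset.mem_union_left _ (Finset.mem_image_of_mem _ hm))

variable [TopologicalSpace X] [T2Space X] [FaithfulSMul G X]

theorem exists_smul_ne_of_finite (hperf : ∀ x : X, ¬ IsOpen ({x} : Set X))
    (hcont : ∀ g : G, Continuous fun x : X => g • x) {a : G} (ha : a ≠ 1) {B : Set X}
    (hB : B.Finite) : ∃ p ∉ B, a • p ≠ p := by
  obtain ⟨p₀, hp₀⟩ : ∃ p : X, a • p ≠ p := by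
    by_contra! h
    exact ha (FaithfulSMul.eq_of_smul_eq_smul fun p => by rw [h, one_smul])
  have hU : IsOpen {p : X | a • p ≠ p} := (isClosed_eq (hcont a) continuous_id).isOpen_compl
  have : (nhdsWithin p₀ {p₀}ᶜ).NeBot :=
    Filter.neBot_iff.2 (mt (isOpen_singleton_iff_punctured_nhds p₀).2 (hperf p₀))
  obtain ⟨p, hp, hpB⟩ := ((infinite_of_mem_nhds p₀ (hU.mem_nhds hp₀)).sdiff hB).nonempty
  exact ⟨p, hpB, hp⟩

theorem exists_injOn_eqOn_imp_eqOn_and_wordProd_ne_one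
    (hperf : ∀ x : X, ¬ IsOpen ({x} : Set X)) (hcont : ∀ g : G, Continuous fun x : X => g • x)
    {g₀ x : G} {w : List (ℤ × G)} (hx : g₀ * wordProd w x ≠ 1)
    (s : Finset X) (f : X → X) (hf : InjOn f s) :
    ∃ (s' : Finset X) (f' : X → X), InjOn f' s' ∧ ∀ g : G, EqOn (g • ·) f' s' →
      EqOn (g • ·) f s ∧ g₀ * wordProd w g ≠ 1 := by
  classical
  obtain ⟨p, hpB, hp⟩ := exists_smul_ne_of_finite hperf hcont hx
    (B := ⋃ c ∈ wordSteps x w, ((c • ·) ⁻¹' s ∪ ((x * c) • ·) ⁻¹' (f '' s)))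
    ((wordSteps x w).finite_toSet.biUnion fun c _ =>
      (s.finite_toSet.preimage (MulAction.injective c).injOn).union
        ((s.finite_toSet.image f).preimage (MulAction.injective _).injOn))
  set D := (wordSteps x w).image (· • p)
  have hD : ∀ q ∈ D, q ∉ s ∧ x • q ∉ f '' s := by
    simp only [D, Finset.mem_image]
    rintro _ ⟨c, hc, rfl⟩
    simp only [mem_iUnion, mem_union, mem_preimage, mul_smul, not_exists, not_or] at hpB
    exact hpB c hc
  refine ⟨s ∪ D, s.piecewise f (x • ·), ?_, fun g hg => ⟨?_, fun h1 => hp ?_⟩⟩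
  · rw [Finset.coe_union, injOn_union (Finset.disjoint_coe.2
      (Finset.disjoint_right.2 fun q hq => (hD q hq).1))]
    refine ⟨hf.congr fun q hq => (s.piecewise_eq_of_mem _ _ hq).symm,
      (MulAction.injective x).injOn.congr fun q hq =>
        (s.piecewise_eq_of_notMem _ _ (hD q hq).1).symm, fun q hq q' hq' heq => ?_⟩
    rw [s.piecewise_eq_of_mem _ _ hq, s.piecewise_eq_of_notMem _ _ (hD q' hq').1] at heq
    exact (hD q' hq').2 ⟨q, hq, heq⟩
  · exact fun q hq => (hg (Finset.mem_union_left _ hq)).trans (s.piecewise_eq_of_mem _ _ hq)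
  · have hagree : ∀ c ∈ wordSteps x w, g • c • p = x • c • p := fun c hc => by
      have hcD : c • p ∈ D := Finset.mem_image_of_mem _ hc
      exact (hg (Finset.mem_union_right _ hcD)).trans
        (s.piecewise_eq_of_notMem _ _ (hD _ hcD).1)
    rw [mul_smul, ← wordProd_smul_eq_of_forall_mem_wordSteps hagree, ← mul_smul, h1, one_smul]

theorem exists_injOn_eqOn_subset_sInter (hperf : ∀ x : X, ¬ IsOpen ({x} : Set X))
    (hcont : ∀ g : G, Continuous fun x : X => g • x) {F : Set (Set G)} (hF : F.Finite)
    (hFS : ∀ t ∈ F, t.Nonempty ∧ ∃ g₀ w, t = {x | g₀ * wordProd w x ≠ 1}) :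
    ∃ (s : Finset X) (f : X → X), InjOn f s ∧ {g : G | EqOn (g • ·) f s} ⊆ ⋂₀ F := by
  refine Set.Finite.induction_on_subset
    (motive := fun T _ => ∃ (s : Finset X) (f : X → X), InjOn f s ∧
      {g : G | EqOn (g • ·) f s} ⊆ ⋂₀ T) F hF ⟨∅, id, by simp, by simp⟩ ?_
  rintro t T ht - - ⟨s, f, hf, hsub⟩
  obtain ⟨⟨x, hx⟩, g₀, w, rfl⟩ := hFS t ht
  obtain ⟨s', f', hf', hext⟩ :=
    exists_injOn_eqOn_imp_eqOn_and_wordProd_ne_one hperf hcont hx s f hf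
  refine ⟨s', f', hf', fun g hg => ?_⟩
  rw [sInter_insert]
  exact ⟨(hext g hg).2, hsub (hext g hg).1⟩

end

/-- If a group acts faithfully and highly transitively by homeomorphisms on a
Hausdorff space without isolated points, then its group Zariski topology is
irreducible; in particular (the group being nontrivial) it is neither Hausdorff
nor a group topology. -/
theorem zariski_irreducible_of_highly_transitive_action
    {X : Type*} [TopologicalSpace X] [T2Space X]
    (hperf : ∀ x : X, ¬ IsOpen ({x} : Set X))
    (G : Type*) [Group G] [MulAction G X] [FaithfulSMul G X]
    (hcont : ∀ g : G, Continuous fun x : X => g • x)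
    (htrans : ∀ (f : X → X) (s : Finset X), Set.InjOn f ↑s →
      ∃ g : G, ∀ x ∈ s, g • x = f x) :
    (∀ U V : Set G, (zariskiTopology G).IsOpen U → (zariskiTopology G).IsOpen V →
        U.Nonempty → V.Nonempty → (U ∩ V).Nonempty) ∧
    (Nontrivial G → ¬ @T2Space G (zariskiTopology G) ∧
        ¬ @IsTopologicalGroup G (zariskiTopology G) _) := by
  let := zariskiTopology G
  have : PreirreducibleSpace G := preirreducibleSpace_generateFrom fun F hFS hF hne => by
    obtain ⟨s, f, hf, hsub⟩ := exists_injOn_eqOn_subset_sInter hperf hcont hF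
      fun t ht => ⟨hne t ht, hFS ht⟩
    obtain ⟨g, hg⟩ := htrans f s hf
    exact ⟨g, hsub hg⟩
  have : T1Space G := zariskiTopology_t1Space
  refine ⟨fun U V hU hV => nonempty_preirreducible_inter hU hV, fun _ => ?_⟩
  have hT2 : ¬ T2Space G := fun _ => not_preirreducible_nontrivial_t2 G
  exact ⟨hT2, fun _ => hT2 inferInstance⟩
end
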